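/- Let r := p(X̃) ← (X̃ = s̃ ∧ Ỹ = t̃) ◇ q(Ỹ) be a flat rule and Δ = (τ, δ) a filter. If Δ satisfies the four syntactic conditions (DNsyn1) ⟨p(s̃)|true⟩|τ is more general than δ(p), (DNsyn2) δ(q) is more general than ⟨q(t̃)|true⟩|τ, (DNsyn3) Var(s̃|τ) ∩ Var(s̃|τ̄) = ∅, and (DNsyn4) Var(s̃|τ) ∩ Var(t̃|τ̄) = ∅, then Δ is DNlog for r. -/
import Mathlib


/- A formalization of binary CLP(C): terms, constraints, queries, rules,
   derivation steps, loops, projections, filters, DN / DNlog / DNsyn. -/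

namespace CLP

/-- First-order terms over a signature of function symbols `F` with arities `arF`. -/
inductive Tm (F : Type) (arF : F → ℕ) : Type
  | var : ℕ → Tm F arF
  | app : (f : F) → (Fin (arF f) → Tm F arF) → Tm F arF

variable {F : Type} {arF : F → ℕ} {Pc : Type} {arP : Pc → ℕ}
  {Prd : Type} {arPrd : Prd → ℕ} {D : Type}

/-- Variables of a term. -/
def Tm.fv : Tm F arF → Finset ℕ
  | .var x => {x}
  | .app _ ts => Finset.univ.biUnion fun i => (ts i).fv

/-- Apply a variable substitution to a term. -/
def Tm.rename (σ : ℕ → ℕ) : Tm F arF → Tm F arF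
  | .var x => .var (σ x)
  | .app f ts => .app f fun i => (ts i).rename σ

/-- Finite conjunctions of primitive constraints (including equality). -/
inductive Con (F : Type) (arF : F → ℕ) (Pc : Type) (arP : Pc → ℕ) : Type
  | tru : Con F arF Pc arP
  | eq : Tm F arF → Tm F arF → Con F arF Pc arP
  | prim : (c : Pc) → (Fin (arP c) → Tm F arF) → Con F arF Pc arP
  | and : Con F arF Pc arP → Con F arF Pc arP → Con F arF Pc arP

/-- Variables of a constraint. -/
def Con.fv : Con F arF Pc arP → Finset ℕ
  | .tru => ∅
  | .eq s t => s.fv ∪ t.fv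
  | .prim _ ts => Finset.univ.biUnion fun i => (ts i).fv
  | .and c d => c.fv ∪ d.fv

/-- Apply a variable substitution to a constraint. -/
def Con.rename (σ : ℕ → ℕ) : Con F arF Pc arP → Con F arF Pc arP
  | .tru => .tru
  | .eq s t => .eq (s.rename σ) (t.rename σ)
  | .prim c ts => .prim c fun i => (ts i).rename σ
  | .and c d => .and (c.rename σ) (d.rename σ)

/-- The domain of computation `D_C`: an interpretation of the function and
constraint-predicate symbols over a domain `D`. -/
structure Interp (F : Type) (arF : F → ℕ) (Pc : Type) (arP : Pc → ℕ) (D : Type) where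
  fn : (f : F) → (Fin (arF f) → D) → D
  pr : (c : Pc) → (Fin (arP c) → D) → Prop

/-- Evaluation of a term under a valuation `v : Var → D`. -/
def Tm.eval (If : (f : F) → (Fin (arF f) → D) → D) (v : ℕ → D) : Tm F arF → D
  | .var x => v x
  | .app f ts => If f fun i => (ts i).eval If v

/-- `D_C ⊨_v c`. -/
def Con.Sat (I : Interp F arF Pc arP D) (v : ℕ → D) : Con F arF Pc arP → Prop
  | .tru => True
  | .eq s t => s.eval I.fn v = t.eval I.fn v
  | .prim c ts => I.pr c fun i => (ts i).eval I.fn v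
  | .and c d => c.Sat I v ∧ d.Sat I v

/-- A query `⟨p(t̃) | d⟩`. -/
structure Query (F : Type) (arF : F → ℕ) (Pc : Type) (arP : Pc → ℕ)
    (Prd : Type) (arPrd : Prd → ℕ) where
  p : Prd
  args : Fin (arPrd p) → Tm F arF
  con : Con F arF Pc arP

/-- Variables of a query. -/
def Query.fv (S : Query F arF Pc arP Prd arPrd) : Finset ℕ :=
  (Finset.univ.biUnion fun i => (S.args i).fv) ∪ S.con.fv

/-- Apply a variable substitution to a query. -/
def Query.rename (σ : ℕ → ℕ) (S : Query F arF Pc arP Prd arPrd) :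
    Query F arF Pc arP Prd arPrd :=
  ⟨S.p, fun i => (S.args i).rename σ, S.con.rename σ⟩

/-- The set `[S]` of atoms (predicate applied to domain values) described by a query `S`. -/
def Query.set (I : Interp F arF Pc arP D) (S : Query F arF Pc arP Prd arPrd) :
    Set (Σ p : Prd, Fin (arPrd p) → D) :=
  { a | ∃ v : ℕ → D, S.con.Sat I v ∧ a = ⟨S.p, fun i => (S.args i).eval I.fn v⟩ }

/-- `S'` is more general than `S` iff `[S] ⊆ [S']`. -/
def MoreGen (I : Interp F arF Pc arP D) (S' S : Query F arF Pc arP Prd arPrd) : Prop :=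
  S.set I ⊆ S'.set I

/-- A binary rule `p(s̃) ← c ◇ q(t̃)`. -/
structure Rule (F : Type) (arF : F → ℕ) (Pc : Type) (arP : Pc → ℕ)
    (Prd : Type) (arPrd : Prd → ℕ) where
  hp : Prd
  hargs : Fin (arPrd hp) → Tm F arF
  con : Con F arF Pc arP
  bp : Prd
  bargs : Fin (arPrd bp) → Tm F arF

/-- Variables of a rule. -/
def Rule.fv (r : Rule F arF Pc arP Prd arPrd) : Finset ℕ :=
  (Finset.univ.biUnion fun i => (r.hargs i).fv) ∪ r.con.fv ∪
    (Finset.univ.biUnion fun i => (r.bargs i).fv)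

/-- Apply a variable substitution to a rule. -/
def Rule.rename (σ : ℕ → ℕ) (r : Rule F arF Pc arP Prd arPrd) : Rule F arF Pc arP Prd arPrd :=
  ⟨r.hp, fun i => (r.hargs i).rename σ, r.con.rename σ, r.bp, fun i => (r.bargs i).rename σ⟩

/-- `r'` is a variant of `r`: obtained by renaming the variables by a bijection. -/
def Rule.IsVariant (r r' : Rule F arF Pc arP Prd arPrd) : Prop :=
  ∃ ρ : ℕ ≃ ℕ, r' = r.rename ρ

/-- The query `⟨H | c⟩` of a rule `H ← c ◇ B`. -/
def Rule.headQuery (r : Rule F arF Pc arP Prd arPrd) : Query F arF Pc arP Prd arPrd :=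
  ⟨r.hp, r.hargs, r.con⟩

/-- The query `⟨B | c⟩` of a rule `H ← c ◇ B`. -/
def Rule.bodyQuery (r : Rule F arF Pc arP Prd arPrd) : Query F arF Pc arP Prd arPrd :=
  ⟨r.bp, r.bargs, r.con⟩

/-- The constraint `ũ = w̃` for two sequences of terms. -/
def argsEqCon {n : ℕ} (u w : Fin n → Tm F arF) : Con F arF Pc arP :=
  (List.ofFn fun i => Con.eq (u i) (w i)).foldr .and .tru

/-- The constraint `s̃' = ũ ∧ c' ∧ d` of the query resulting from a derivation step of
`S = ⟨p(ũ) | d⟩` with input rule `r' = p(s̃') ← c' ◇ q(t̃')`. -/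
def stepCon (r' : Rule F arF Pc arP Prd arPrd) (S : Query F arF Pc arP Prd arPrd)
    (h : r'.hp = S.p) : Con F arF Pc arP :=
  Con.and
    (argsEqCon (fun i : Fin (arPrd S.p) => r'.hargs (Fin.cast (congrArg arPrd h).symm i)) S.args)
    (Con.and r'.con S.con)

/-- Derivation step of `S` using the (already renamed-apart) input rule `r'`:
the constraint `s̃' = ũ ∧ c' ∧ d` must be satisfiable in `D_C`, and the resulting
query is `⟨q(t̃') | s̃' = ũ ∧ c' ∧ d⟩`. -/
def StepWith (I : Interp F arF Pc arP D) (r' : Rule F arF Pc arP Prd arPrd)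
    (S T : Query F arF Pc arP Prd arPrd) : Prop :=
  ∃ h : r'.hp = S.p, (∃ v : ℕ → D, (stepCon r' S h).Sat I v) ∧
    T = ⟨r'.bp, r'.bargs, stepCon r' S h⟩

/-- Derivation step `S ⟹_r T`: there is a variant `r'` of `r`, variable disjoint
with `S`, which is an input rule for a step from `S` to `T`. -/
def Step (I : Interp F arF Pc arP D) (r : Rule F arF Pc arP Prd arPrd)
    (S T : Query F arF Pc arP Prd arPrd) : Prop :=
  ∃ r' : Rule F arF Pc arP Prd arPrd,
    r.IsVariant r' ∧ Disjoint r'.fv S.fv ∧ StepWith I r' S T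

/-- `S₀` loops w.r.t. the program `P`: there is an infinite derivation of `P ∪ {S₀}`,
i.e. an infinite sequence of derivation steps whose input rules are variants of rules
of `P`, variable disjoint from `S₀` and from the input rules used at earlier steps
(standardization apart). -/
def Loops (I : Interp F arF Pc arP D) (P : Set (Rule F arF Pc arP Prd arPrd))
    (S₀ : Query F arF Pc arP Prd arPrd) : Prop :=
  ∃ (S : ℕ → Query F arF Pc arP Prd arPrd) (rv : ℕ → Rule F arF Pc arP Prd arPrd),
    S 0 = S₀ ∧
    ∀ n : ℕ, (∃ r ∈ P, r.IsVariant (rv n)) ∧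
      Disjoint (rv n).fv S₀.fv ∧ (∀ m < n, Disjoint (rv n).fv (rv m).fv) ∧
      StepWith I (rv n) (S n) (S (n + 1))

/-! ## Sets of positions, projections, filters -/

/-- The set `[S|τ]` of projected atoms described by the projection of a query on a
set of positions `τ`. -/
def Query.projSet (I : Interp F arF Pc arP D) (τ : ∀ p : Prd, Set (Fin (arPrd p)))
    (S : Query F arF Pc arP Prd arPrd) :
    Set (Σ p : Prd, {i : Fin (arPrd p) // i ∈ τ p} → D) :=
  { a | ∃ v : ℕ → D, S.con.Sat I v ∧ a = ⟨S.p, fun i => (S.args i.1).eval I.fn v⟩ }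

/-- The complement `τ̄` of a set of positions. -/
def complPos (τ : ∀ p : Prd, Set (Fin (arPrd p))) : ∀ p : Prd, Set (Fin (arPrd p)) :=
  fun p => (τ p)ᶜ

/-- A query over a projected predicate `p|τ`. -/
structure PQuery (F : Type) (arF : F → ℕ) (Pc : Type) (arP : Pc → ℕ)
    {Prd : Type} {arPrd : Prd → ℕ} (τ : ∀ p : Prd, Set (Fin (arPrd p))) (p : Prd) where
  args : {i : Fin (arPrd p) // i ∈ τ p} → Tm F arF
  con : Con F arF Pc arP

/-- The set of projected atoms described by a projected query. -/
def PQuery.set (I : Interp F arF Pc arP D) {τ : ∀ p : Prd, Set (Fin (arPrd p))} {p : Prd}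
    (Q : PQuery F arF Pc arP τ p) :
    Set (Σ q : Prd, {i : Fin (arPrd q) // i ∈ τ q} → D) :=
  { a | ∃ v : ℕ → D, Q.con.Sat I v ∧ a = ⟨p, fun i => (Q.args i).eval I.fn v⟩ }

/-- A filter `Δ = (τ, δ)`: a set of positions together with, for each predicate `p`,
a query `δ(p)` over the projected predicate `p|τ` with satisfiable constraint. -/
structure Filt {F : Type} {arF : F → ℕ} {Pc : Type} {arP : Pc → ℕ} {D : Type}
    (I : Interp F arF Pc arP D) (Prd : Type) (arPrd : Prd → ℕ) where
  τ : ∀ p : Prd, Set (Fin (arPrd p))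
  δ : ∀ p : Prd, PQuery F arF Pc arP τ p
  δ_sat : ∀ p : Prd, ∃ v : ℕ → D, (δ p).con.Sat I v

variable {I : Interp F arF Pc arP D}

/-- A query `S` satisfies the filter `Δ` iff `[S|τ] ⊆ [δ(rel(S))]`. -/
def Filt.Satisfies (Δ : Filt I Prd arPrd) (S : Query F arF Pc arP Prd arPrd) : Prop :=
  S.projSet I Δ.τ ⊆ (Δ.δ S.p).set I

/-- `S'` is `Δ`-more general than `S`: `S'|τ̄` is more general than `S|τ̄`
and `S'` satisfies `Δ`. -/
def Filt.DeltaMoreGen (Δ : Filt I Prd arPrd) (S' S : Query F arF Pc arP Prd arPrd) : Prop :=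
  S.projSet I (complPos Δ.τ) ⊆ S'.projSet I (complPos Δ.τ) ∧ Δ.Satisfies S'

/-- `Δ` is derivation neutral (DN) for `r`. -/
def Filt.DN (Δ : Filt I Prd arPrd) (r : Rule F arF Pc arP Prd arPrd) : Prop :=
  ∀ S T, Step I r S T → ∀ S', Δ.DeltaMoreGen S' S →
    ∃ T', Step I r S' T' ∧ Δ.DeltaMoreGen T' T

/-! ## Normalized rules and DNlog -/

/-- A normalized rule `p(X̃) ← c ◇ q(Ỹ)` where `X̃, Ỹ` are disjoint sequences of
distinct variables. -/
structure NRule (F : Type) (arF : F → ℕ) (Pc : Type) (arP : Pc → ℕ)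
    (Prd : Type) (arPrd : Prd → ℕ) where
  hp : Prd
  X : Fin (arPrd hp) → ℕ
  bp : Prd
  Y : Fin (arPrd bp) → ℕ
  hX : Function.Injective X
  hY : Function.Injective Y
  hXY : ∀ i j, X i ≠ Y j
  con : Con F arF Pc arP

/-- The underlying rule of a normalized rule. -/
def NRule.toRule (r : NRule F arF Pc arP Prd arPrd) : Rule F arF Pc arP Prd arPrd :=
  ⟨r.hp, fun i => .var (r.X i), r.con, r.bp, fun i => .var (r.Y i)⟩

/-- `local_var(r) = Var(c) ∖ (Var(X̃) ∪ Var(Ỹ))`. -/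
def NRule.localVar (r : NRule F arF Pc arP Prd arPrd) : Set ℕ :=
  ↑r.con.fv \ (Set.range r.X ∪ Set.range r.Y)

/-- `v` and `w` agree on all variables outside `W`. -/
def agreesOff (W : Set ℕ) (v w : ℕ → D) : Prop := ∀ x ∉ W, v x = w x

/-- Semantics under `v` of the formula `sat(s̃, Q) = ∃_{Var(Q')} (s̃ = ũ' ∧ d')`,
`Q'` a variable-disjoint variant of `Q = ⟨p|τ(ũ) | d⟩`. -/
def satFor (I : Interp F arF Pc arP D) {τ : ∀ p : Prd, Set (Fin (arPrd p))} {p : Prd}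
    (s : {i : Fin (arPrd p) // i ∈ τ p} → Tm F arF) (Q : PQuery F arF Pc arP τ p)
    (v : ℕ → D) : Prop :=
  ∃ w : ℕ → D, Q.con.Sat I w ∧ ∀ i, (s i).eval I.fn v = (Q.args i).eval I.fn w

/-- `Δ` is DNlog for a normalized rule `r = p(X̃) ← c ◇ q(Ỹ)`:
`D_C ⊨ c → ∀_{X̃|τ} [ sat(X̃|τ, δ(p)) → ∃_Y (sat(Ỹ|τ, δ(q)) ∧ c) ]` where
`Y = Var(Ỹ|τ) ∪ local_var(r)`. -/
def Filt.DNlog (Δ : Filt I Prd arPrd) (r : NRule F arF Pc arP Prd arPrd) : Prop :=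
  ∀ v : ℕ → D, r.con.Sat I v →
    ∀ v₁ : ℕ → D, agreesOff (r.X '' Δ.τ r.hp) v₁ v →
      satFor I (fun i => Tm.var (r.X i.1)) (Δ.δ r.hp) v₁ →
        ∃ v₂ : ℕ → D,
          agreesOff (r.Y '' Δ.τ r.bp ∪ r.localVar) v₂ v₁ ∧
          satFor I (fun i => Tm.var (r.Y i.1)) (Δ.δ r.bp) v₂ ∧ r.con.Sat I v₂

/-! ## Flat rules and DNsyn -/

/-- Variables of a sequence of terms. -/
def varsOf {n : ℕ} (s : Fin n → Tm F arF) : Finset ℕ :=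
  Finset.univ.biUnion fun i => (s i).fv

/-- Variables of the projection of a sequence of terms on a set of positions. -/
def varsOfProj {n : ℕ} (σ : Set (Fin n)) (s : Fin n → Tm F arF) : Set ℕ :=
  ⋃ i : {i : Fin n // i ∈ σ}, ↑(s i.1).fv

/-- A flat rule `p(X̃) ← (X̃ = s̃ ∧ Ỹ = t̃) ◇ q(Ỹ)` with `Var(s̃, t̃)` local. -/
structure FlatRule (F : Type) (arF : F → ℕ) (Pc : Type) (arP : Pc → ℕ)
    (Prd : Type) (arPrd : Prd → ℕ) extends NRule F arF Pc arP Prd arPrd where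
  s : Fin (arPrd hp) → Tm F arF
  t : Fin (arPrd bp) → Tm F arF
  con_eq : con = Con.and (argsEqCon (fun i => Tm.var (X i)) s)
                         (argsEqCon (fun i => Tm.var (Y i)) t)
  local_args : ∀ x ∈ varsOf s ∪ varsOf t, x ∉ Set.range X ∪ Set.range Y

/-! ## The constraint domain Term (logic programming) -/

/-- Finite trees (ground terms) over `F`. -/
inductive GTm (F : Type) (arF : F → ℕ) : Type
  | app : (f : F) → (Fin (arF f) → GTm F arF) → GTm F arF

/-- Arities for the empty set of constraint-predicate symbols (only `=` is available). -/
def emptyAr : Empty → ℕ := fun c => c.elim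

/-- The domain of computation of the constraint domain `Term`: the algebra of
finite trees, with no primitive constraints but equality. -/
def termInterp (F : Type) (arF : F → ℕ) : Interp F arF Empty emptyAr (GTm F arF) :=
  ⟨fun f ts => GTm.app f ts, fun c => c.elim⟩

/-! ## Auxiliary lemmas -/

theorem Tm.eval_congr (If : (f : F) → (Fin (arF f) → D) → D) {v w : ℕ → D} :
    ∀ t : Tm F arF, (∀ x ∈ t.fv, v x = w x) → t.eval If v = t.eval If w
  | .var x, h => h x (by simp [Tm.fv])
  | .app f ts, h => by
    simp only [Tm.eval]
    congr 1
    funext i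
    exact Tm.eval_congr If (ts i) fun x hx => h x (by
      simp only [Tm.fv, Finset.mem_biUnion, Finset.mem_univ, true_and]
      exact ⟨i, hx⟩)

theorem foldr_sat (I : Interp F arF Pc arP D) (v : ℕ → D) :
    ∀ l : List (Con F arF Pc arP),
      (l.foldr Con.and Con.tru).Sat I v ↔ ∀ c ∈ l, c.Sat I v
  | [] => by simp [Con.Sat]
  | c :: l => by
      simp only [List.foldr_cons, Con.Sat, foldr_sat I v l, List.mem_cons]
      constructor
      · rintro ⟨h1, h2⟩ d (rfl | hd)
        · exact h1
        · exact h2 d hd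
      · intro h
        exact ⟨h c (Or.inl rfl), fun d hd => h d (Or.inr hd)⟩

theorem argsEqCon_sat (I : Interp F arF Pc arP D) (v : ℕ → D) {n : ℕ}
    (u w : Fin n → Tm F arF) :
    (argsEqCon (Pc := Pc) (arP := arP) u w).Sat I v ↔
      ∀ i, (u i).eval I.fn v = (w i).eval I.fn v := by
  rw [argsEqCon, foldr_sat]
  constructor
  · intro h i
    exact h _ (by rw [List.mem_ofFn]; exact ⟨i, rfl⟩)
  · intro h c hc
    rw [List.mem_ofFn] at hc
    obtain ⟨i, rfl⟩ := hc
    exact h i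

theorem foldr_fv {x : ℕ} : ∀ l : List (Con F arF Pc arP),
    x ∈ (l.foldr Con.and Con.tru).fv ↔ ∃ c ∈ l, x ∈ c.fv
  | [] => by simp [Con.fv]
  | c :: l => by
      simp only [List.foldr_cons, Con.fv, Finset.mem_union, foldr_fv l, List.mem_cons]
      constructor
      · rintro (h | ⟨d, hd, hx⟩)
        · exact ⟨c, Or.inl rfl, h⟩
        · exact ⟨d, Or.inr hd, hx⟩
      · rintro ⟨d, (rfl | hd), hx⟩
        · exact Or.inl hx
        · exact Or.inr ⟨d, hd, hx⟩

theorem mem_argsEqCon_fv_right {x : ℕ} {n : ℕ} {u w : Fin n → Tm F arF} {i : Fin n}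
    (hx : x ∈ (w i).fv) : x ∈ (argsEqCon (Pc := Pc) (arP := arP) u w).fv := by
  rw [argsEqCon, foldr_fv]
  exact ⟨Con.eq (u i) (w i), by rw [List.mem_ofFn]; exact ⟨i, rfl⟩,
    by simp [Con.fv]; exact Or.inr hx⟩

end CLP
open CLP in
/-- for a flat rule `r = p(X̃) ← (X̃ = s̃ ∧ Ỹ = t̃) ◇ q(Ỹ)`, the four
syntactic conditions (DNsyn1)–(DNsyn4) imply that `Δ` is DNlog for `r`. -/
theorem stmt12 {F : Type} {arF : F → ℕ} {Pc : Type} {arP : Pc → ℕ}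
    {Prd : Type} {arPrd : Prd → ℕ} {D : Type} {I : Interp F arF Pc arP D}
    (Δ : Filt I Prd arPrd) (r : FlatRule F arF Pc arP Prd arPrd)
    (h1 : (Δ.δ r.hp).set I ⊆
      PQuery.set I (⟨fun i => r.s i.1, Con.tru⟩ : PQuery F arF Pc arP Δ.τ r.hp))
    (h2 : PQuery.set I (⟨fun i => r.t i.1, Con.tru⟩ : PQuery F arF Pc arP Δ.τ r.bp) ⊆
      (Δ.δ r.bp).set I)
    (h3 : varsOfProj (Δ.τ r.hp) r.s ∩ varsOfProj ((Δ.τ r.hp)ᶜ) r.s = ∅)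
    (h4 : varsOfProj (Δ.τ r.hp) r.s ∩ varsOfProj ((Δ.τ r.bp)ᶜ) r.t = ∅) :
    Δ.DNlog r.toNRule := by
  classical
  intro v hv v₁ hagr hsat
  obtain ⟨w, hw, hwe⟩ := hsat
  obtain ⟨u, -, hu⟩ := h1 ⟨w, hw, rfl⟩
  have hsu : ∀ i : {i : Fin (arPrd r.hp) // i ∈ Δ.τ r.hp},
      (r.s i.1).eval I.fn u = ((Δ.δ r.hp).args i).eval I.fn w :=
    fun i => (congrFun (eq_of_heq (Sigma.mk.inj_iff.mp hu).2) i).symm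
  -- unpack the constraint of the flat rule
  have hv' := hv
  rw [r.con_eq] at hv'
  obtain ⟨hvs, hvt⟩ := hv'
  rw [argsEqCon_sat] at hvs hvt
  simp only [Tm.eval] at hvs hvt
  -- locality of the variables of s̃ and t̃
  have hsnotXY : ∀ (i) (x), x ∈ (r.s i).fv → x ∉ Set.range r.X ∪ Set.range r.Y :=
    fun i x hx => r.local_args x
      (Finset.mem_union_left _ (Finset.mem_biUnion.mpr ⟨i, Finset.mem_univ i, hx⟩))
  have htnotXY : ∀ (j) (x), x ∈ (r.t j).fv → x ∉ Set.range r.X ∪ Set.range r.Y :=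
    fun j x hx => r.local_args x
      (Finset.mem_union_right _ (Finset.mem_biUnion.mpr ⟨j, Finset.mem_univ j, hx⟩))
  have hv1v : ∀ x, x ∉ Set.range r.X → v₁ x = v x := by
    intro x hx
    refine hagr x fun hmem => hx ?_
    obtain ⟨i, -, hi⟩ := hmem
    exact ⟨i, hi⟩
  -- the intermediate valuation vb
  set Vs : Set ℕ := varsOfProj (Δ.τ r.hp) r.s with hVs
  have hVsnotXY : ∀ x ∈ Vs, x ∉ Set.range r.X ∪ Set.range r.Y := by
    intro x hx
    obtain ⟨⟨i, hi⟩, hxm⟩ := Set.mem_iUnion.mp hx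
    exact hsnotXY i x (Finset.mem_coe.mp hxm)
  have h3' : ∀ x ∈ Vs, ∀ i : Fin (arPrd r.hp), i ∉ Δ.τ r.hp → x ∉ (r.s i).fv := by
    intro x hx i hi hxf
    exact Set.eq_empty_iff_forall_notMem.mp h3 x
      ⟨hx, Set.mem_iUnion.mpr ⟨⟨i, hi⟩, Finset.mem_coe.mpr hxf⟩⟩
  have h4' : ∀ x ∈ Vs, ∀ j : Fin (arPrd r.bp), j ∉ Δ.τ r.bp → x ∉ (r.t j).fv := by
    intro x hx j hj hxf
    exact Set.eq_empty_iff_forall_notMem.mp h4 x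
      ⟨hx, Set.mem_iUnion.mpr ⟨⟨j, hj⟩, Finset.mem_coe.mpr hxf⟩⟩
  set vb : ℕ → D := fun x => if x ∈ Vs then u x else v₁ x with hvbdef
  have hvbu : ∀ x ∈ Vs, vb x = u x := fun x hx => if_pos hx
  have hvb1 : ∀ x ∉ Vs, vb x = v₁ x := fun x hx => if_neg hx
  -- the final valuation v₂
  set P : ℕ → Prop := fun x => ∃ j, j ∈ Δ.τ r.bp ∧ x = r.Y j with hPdef
  set v₂ : ℕ → D := fun x =>
    if h : P x then (r.t h.choose).eval I.fn vb else vb x with hv2def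
  have hv2Y : ∀ j ∈ Δ.τ r.bp, v₂ (r.Y j) = (r.t j).eval I.fn vb := by
    intro j hj
    have hP : P (r.Y j) := ⟨j, hj, rfl⟩
    have h1' : v₂ (r.Y j) = (r.t hP.choose).eval I.fn vb := dif_pos hP
    obtain ⟨-, he⟩ := hP.choose_spec
    rw [h1', ← r.hY he]
  have hPloc : ∀ x, x ∉ Set.range r.Y → ¬ P x := by
    rintro x hx ⟨j, -, he⟩
    exact hx ⟨j, he.symm⟩
  have hv2nY : ∀ x, ¬ P x → v₂ x = vb x := fun x hx => dif_neg hx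
  -- evaluation of s̃ and t̃ under v₂ equals evaluation under vb
  have hev2s : ∀ i, (r.s i).eval I.fn v₂ = (r.s i).eval I.fn vb := fun i =>
    Tm.eval_congr I.fn _ fun x hx =>
      hv2nY x (hPloc x fun hr => hsnotXY i x hx (Or.inr hr))
  have hev2t : ∀ j, (r.t j).eval I.fn v₂ = (r.t j).eval I.fn vb := fun j =>
    Tm.eval_congr I.fn _ fun x hx =>
      hv2nY x (hPloc x fun hr => htnotXY j x hx (Or.inr hr))
  -- Vs ⊆ localVar
  have hVsloc : Vs ⊆ r.toNRule.localVar := by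
    intro x hx
    obtain ⟨⟨i, hi⟩, hxm⟩ := Set.mem_iUnion.mp hx
    have hxf : x ∈ (r.s i).fv := Finset.mem_coe.mp hxm
    refine ⟨Finset.mem_coe.mpr ?_, hsnotXY i x hxf⟩
    rw [r.con_eq]
    exact Finset.mem_union_left _ (mem_argsEqCon_fv_right hxf)
  refine ⟨v₂, ?_, ?_, ?_⟩
  · -- v₂ agrees with v₁ off Y''τ(q) ∪ localVar
    intro x hx
    have hx1 : x ∉ r.Y '' Δ.τ r.bp := fun h => hx (Or.inl h)
    have hx2 : x ∉ r.toNRule.localVar := fun h => hx (Or.inr h)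
    have hnP : ¬ P x := by
      rintro ⟨j, hj, rfl⟩
      exact hx1 ⟨j, hj, rfl⟩
    rw [hv2nY x hnP]
    exact hvb1 x fun hxVs => hx2 (hVsloc hxVs)
  · -- satFor for Ỹ|τ and δ(q)
    obtain ⟨w₂, hw₂, hu₂⟩ := h2 (⟨vb, trivial, rfl⟩ :
      (⟨r.bp, fun j => (r.t j.1).eval I.fn vb⟩ : Σ q : Prd, {i : Fin (arPrd q) // i ∈ Δ.τ q} → D) ∈
        PQuery.set I (⟨fun i => r.t i.1, Con.tru⟩ : PQuery F arF Pc arP Δ.τ r.bp))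
    have htw : ∀ j : {j : Fin (arPrd r.bp) // j ∈ Δ.τ r.bp},
        (r.t j.1).eval I.fn vb = ((Δ.δ r.bp).args j).eval I.fn w₂ :=
      fun j => congrFun (eq_of_heq (Sigma.mk.inj_iff.mp hu₂).2) j
    refine ⟨w₂, hw₂, fun j => ?_⟩
    show v₂ (r.Y j.1) = ((Δ.δ r.bp).args j).eval I.fn w₂
    rw [hv2Y j.1 j.2, htw j]
  · -- v₂ satisfies the constraint of r
    rw [r.con_eq]
    constructor
    · rw [argsEqCon_sat]
      intro i
      show v₂ (r.X i) = (r.s i).eval I.fn v₂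
      have hXnV : r.X i ∉ Vs := fun h => hVsnotXY _ h (Or.inl ⟨i, rfl⟩)
      have hXnP : ¬ P (r.X i) := by
        rintro ⟨j, -, he⟩
        exact r.hXY i j he
      rw [hv2nY _ hXnP, hvb1 _ hXnV, hev2s i]
      by_cases hi : i ∈ Δ.τ r.hp
      · have hevu : (r.s i).eval I.fn vb = (r.s i).eval I.fn u :=
          Tm.eval_congr I.fn _ fun x hx =>
            hvbu x (Set.mem_iUnion.mpr ⟨⟨i, hi⟩, Finset.mem_coe.mpr hx⟩)
        rw [hevu, hsu ⟨i, hi⟩]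
        exact hwe ⟨i, hi⟩
      · have hevv : (r.s i).eval I.fn vb = (r.s i).eval I.fn v :=
          Tm.eval_congr I.fn _ fun x hx => by
            have hxnV : x ∉ Vs := fun hV => h3' x hV i hi hx
            rw [hvb1 x hxnV]
            exact hv1v x fun hr => hsnotXY i x hx (Or.inl hr)
        have hXi : v₁ (r.X i) = v (r.X i) := by
          refine hagr _ fun hmem => ?_
          obtain ⟨i', hi', he⟩ := hmem
          rw [r.hX he] at hi'
          exact hi hi'
        rw [hevv, hXi]
        exact hvs i
    · rw [argsEqCon_sat]
      intro j
      show v₂ (r.Y j) = (r.t j).eval I.fn v₂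
      rw [hev2t j]
      by_cases hj : j ∈ Δ.τ r.bp
      · exact hv2Y j hj
      · have hYnP : ¬ P (r.Y j) := by
          rintro ⟨j', hj', he⟩
          rw [r.hY he] at hj
          exact hj hj'
        have hYnV : r.Y j ∉ Vs := fun h => hVsnotXY _ h (Or.inr ⟨j, rfl⟩)
        rw [hv2nY _ hYnP, hvb1 _ hYnV]
        have hevv : (r.t j).eval I.fn vb = (r.t j).eval I.fn v :=
          Tm.eval_congr I.fn _ fun x hx => by
            have hxnV : x ∉ Vs := fun hV => h4' x hV j hj hx
            rw [hvb1 x hxnV]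
            exact hv1v x fun hr => htnotXY j x hx (Or.inl hr)
        have hYj : v₁ (r.Y j) = v (r.Y j) :=
          hv1v _ fun ⟨i, he⟩ => r.hXY i j he
        rw [hevv, hYj]
        exact hvt j
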